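/- Let (E, sim, ser) be a comtrace alphabet and let u, v be step sequences with u ≡ v. Then: (1) weight(u) = weight(v); (2) |u|_a = |v|_a for every a ∈ E; (3) u ÷_R a ≡ v ÷_R a for every a ∈ E (right cancellation); (4) u ÷_L a ≡ v ÷_L a for every a ∈ E (left cancellation); (5) π_D(u) ≡ π_D(v) for every D ⊆ E (projection). -/

import Mathlib

/-! Each property is checked on one generating step `w·A·z ≈ w·B·C·z` and then transported
along the least equivalence relation. As `ser` is irreflexive, `B` and `C` are disjoint, which
gives the two counting invariants. Cancelling an event from, or projecting, a generating step
gives a generating step again, except that `B` or `C` may become empty, and then both sides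
coincide. Right cancellation is left cancellation conjugated by reversal, and reversal turns
the congruence for `ser` into the one for its converse, which is irreflexive as well. -/

variable {E : Type*}

/-- A step over a comtrace alphabet `(E, sim, ser)`: a nonempty finite set of events,
pairwise related by `sim`. -/
def IsStep [DecidableEq E] (sim : E → E → Prop) (A : Finset E) : Prop :=
  A.Nonempty ∧ ∀ a ∈ A, ∀ b ∈ A, a ≠ b → sim a b

/-- A step sequence: a finite list of steps. -/
def IsStepSeq [DecidableEq E] (sim : E → E → Prop) (u : List (Finset E)) : Prop :=
  ∀ A ∈ u, IsStep sim A

/-- The generating relation of comtrace congruence: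
`w·A·z ≈ w·B·C·z` whenever `A`, `B`, `C` are steps with `B ∪ C = A` and `B × C ⊆ ser`. -/
def CTBase [DecidableEq E] (sim ser : E → E → Prop) (u v : List (Finset E)) : Prop :=
  ∃ (w z : List (Finset E)) (A B C : Finset E),
    IsStepSeq sim w ∧ IsStepSeq sim z ∧
    IsStep sim A ∧ IsStep sim B ∧ IsStep sim C ∧
    B ∪ C = A ∧ (∀ b ∈ B, ∀ c ∈ C, ser b c) ∧
    u = w ++ A :: z ∧ v = w ++ B :: C :: z

/-- The least equivalence relation containing `base`. -/
def LeastEquiv {α : Type*} (base : α → α → Prop) (x y : α) : Prop :=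
  ∀ c : α → α → Prop, Equivalence c → (∀ a b, base a b → c a b) → c x y

/-- Comtrace congruence: the least equivalence relation containing `CTBase`. -/
def CTEquiv [DecidableEq E] (sim ser : E → E → Prop) :
    List (Finset E) → List (Finset E) → Prop :=
  LeastEquiv (CTBase sim ser)

/-- The weight of a step sequence: the sum of the sizes of its steps. -/
def weight (u : List (Finset E)) : ℕ := (u.map Finset.card).sum

/-- `occCount a u` is the number of steps of `u` containing `a`. -/
def occCount [DecidableEq E] (a : E) (u : List (Finset E)) : ℕ :=
  u.countP (fun A => decide (a ∈ A))

/-- Left cancellation of an event `a` from a step sequence. -/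
def divL [DecidableEq E] (a : E) : List (Finset E) → List (Finset E)
  | [] => []
  | A :: w =>
    if a ∈ A then (if A = {a} then w else (A.erase a) :: w) else A :: divL a w

/-- Right cancellation of an event `a` from a step sequence. -/
def divR [DecidableEq E] (a : E) (u : List (Finset E)) : List (Finset E) :=
  (divL a u.reverse).reverse

/-- Projection of a step sequence onto a set of events `D`. -/
def proj [DecidableEq E] (D : Finset E) : List (Finset E) → List (Finset E)
  | [] => []
  | A :: w => if A ∩ D = ∅ then proj D w else (A ∩ D) :: proj D w

namespace LeastEquiv

variable {α β γ : Type*} {base : α → α → Prop} {x y z : α}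

theorem refl (x : α) : LeastEquiv base x x :=
  fun _ hc _ => hc.refl x

theorem symm (h : LeastEquiv base x y) : LeastEquiv base y x :=
  fun c hc hb => hc.symm (h c hc hb)

theorem trans (h₁ : LeastEquiv base x y) (h₂ : LeastEquiv base y z) : LeastEquiv base x z :=
  fun c hc hb => hc.trans (h₁ c hc hb) (h₂ c hc hb)

theorem of_base (h : base x y) : LeastEquiv base x y :=
  fun _ _ hb => hb x y h

theorem map {base' : β → β → Prop} (f : α → β)
    (hf : ∀ a b, base a b → LeastEquiv base' (f a) (f b)) (h : LeastEquiv base x y) :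
    LeastEquiv base' (f x) (f y) :=
  h (fun a b => LeastEquiv base' (f a) (f b))
    ⟨fun _ => refl _, symm, trans⟩ hf

theorem apply_eq (f : α → γ) (hf : ∀ a b, base a b → f a = f b) (h : LeastEquiv base x y) :
    f x = f y :=
  h (fun a b => f a = f b) ⟨fun _ => rfl, Eq.symm, Eq.trans⟩ hf

end LeastEquiv

theorem Finset.disjoint_of_forall_rel {r : E → E → Prop} (hr : ∀ a, ¬ r a a) {B C : Finset E}
    (h : ∀ b ∈ B, ∀ c ∈ C, r b c) : Disjoint B C :=
  Finset.disjoint_left.mpr fun {x} hb hc => hr x (h x hb x hc)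

section Steps

variable [DecidableEq E] {sim ser : E → E → Prop}

theorem IsStep.mono {A X : Finset E} (hA : IsStep sim A) (hX : X ⊆ A) (hne : X.Nonempty) :
    IsStep sim X :=
  ⟨hne, fun a ha b hb => hA.2 a (hX ha) b (hX hb)⟩

theorem isStepSeq_nil : IsStepSeq sim ([] : List (Finset E)) :=
  fun _ h => absurd h List.not_mem_nil

theorem isStepSeq_cons {A : Finset E} {w : List (Finset E)} :
    IsStepSeq sim (A :: w) ↔ IsStep sim A ∧ IsStepSeq sim w :=
  List.forall_mem_cons

theorem isStepSeq_append {u w : List (Finset E)} :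
    IsStepSeq sim (u ++ w) ↔ IsStepSeq sim u ∧ IsStepSeq sim w :=
  List.forall_mem_append

theorem isStepSeq_reverse {u : List (Finset E)} : IsStepSeq sim u.reverse ↔ IsStepSeq sim u := by
  simp only [IsStepSeq, List.mem_reverse]

/-- `(X)`, or `λ` when `X = ∅`: what is left of a step after removing some of its events. -/
def stepOrNil (X : Finset E) : List (Finset E) :=
  if X = ∅ then [] else [X]

@[simp]
theorem stepOrNil_empty : stepOrNil (∅ : Finset E) = [] :=
  if_pos rfl

theorem stepOrNil_of_nonempty {X : Finset E} (hX : X.Nonempty) : stepOrNil X = [X] :=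
  if_neg hX.ne_empty

theorem isStepSeq_stepOrNil {A X : Finset E} (hA : IsStep sim A) (hX : X ⊆ A) :
    IsStepSeq sim (stepOrNil X) := by
  rcases X.eq_empty_or_nonempty with rfl | hne
  · rw [stepOrNil_empty]; exact isStepSeq_nil
  · rw [stepOrNil_of_nonempty hne, isStepSeq_cons]
    exact ⟨hA.mono hX hne, isStepSeq_nil⟩

theorem divL_cons_of_mem {a : E} {A : Finset E} (w : List (Finset E)) (ha : a ∈ A) :
    divL a (A :: w) = stepOrNil (A.erase a) ++ w := by
  by_cases hA : A = {a}
  · simp [divL, hA]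
  · have : A.erase a ≠ ∅ := by simp [Finset.erase_eq_empty_iff, hA, Finset.ne_empty_of_mem ha]
    simp [divL, stepOrNil, ha, hA, this]

theorem divL_cons_of_notMem {a : E} {A : Finset E} (w : List (Finset E)) (ha : a ∉ A) :
    divL a (A :: w) = A :: divL a w := by
  simp [divL, ha]

theorem divL_append_of_forall_notMem {a : E} {w : List (Finset E)} (s : List (Finset E))
    (h : ∀ X ∈ w, a ∉ X) : divL a (w ++ s) = w ++ divL a s := by
  induction w with
  | nil => rfl
  | cons A w ih =>
    rw [List.forall_mem_cons] at h
    rw [List.cons_append, divL_cons_of_notMem _ h.1, ih h.2, List.cons_append]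

theorem divL_append_of_exists_mem {a : E} {w : List (Finset E)} (s : List (Finset E))
    (h : ∃ X ∈ w, a ∈ X) : divL a (w ++ s) = divL a w ++ s := by
  induction w with
  | nil => simp at h
  | cons A w ih =>
    by_cases ha : a ∈ A
    · rw [List.cons_append, divL_cons_of_mem _ ha, divL_cons_of_mem _ ha, List.append_assoc]
    · obtain ⟨X, hX, haX⟩ := h
      have hXw : X ∈ w := (List.mem_cons.mp hX).resolve_left (by rintro rfl; exact ha haX)
      rw [List.cons_append, divL_cons_of_notMem _ ha, divL_cons_of_notMem _ ha,
        ih ⟨X, hXw, haX⟩, List.cons_append]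

theorem divL_cons_cons_of_disjoint {a : E} {B C : Finset E} (z : List (Finset E))
    (hB : B.Nonempty) (hC : C.Nonempty) (hBC : Disjoint B C) (ha : a ∈ B ∪ C) :
    divL a (B :: C :: z) = stepOrNil (B.erase a) ++ (stepOrNil (C.erase a) ++ z) := by
  rcases Finset.mem_union.mp ha with haB | haC
  · have haC : a ∉ C := Finset.disjoint_left.mp hBC haB
    rw [divL_cons_of_mem _ haB, Finset.erase_eq_of_notMem haC, stepOrNil_of_nonempty hC]
    rfl
  · have haB : a ∉ B := Finset.disjoint_right.mp hBC haC
    rw [divL_cons_of_notMem _ haB, divL_cons_of_mem _ haC, Finset.erase_eq_of_notMem haB,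
      stepOrNil_of_nonempty hB]
    rfl

theorem isStepSeq_divL (a : E) {w : List (Finset E)} (hw : IsStepSeq sim w) :
    IsStepSeq sim (divL a w) := by
  induction w with
  | nil => exact hw
  | cons A w ih =>
    rw [isStepSeq_cons] at hw
    by_cases ha : a ∈ A
    · rw [divL_cons_of_mem _ ha, isStepSeq_append]
      exact ⟨isStepSeq_stepOrNil hw.1 (Finset.erase_subset a A), hw.2⟩
    · rw [divL_cons_of_notMem _ ha, isStepSeq_cons]
      exact ⟨hw.1, ih hw.2⟩

theorem proj_cons (D A : Finset E) (w : List (Finset E)) :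
    proj D (A :: w) = stepOrNil (A ∩ D) ++ proj D w := by
  by_cases h : A ∩ D = ∅ <;> simp [proj, stepOrNil, h]

theorem proj_append (D : Finset E) (u w : List (Finset E)) :
    proj D (u ++ w) = proj D u ++ proj D w := by
  induction u with
  | nil => rfl
  | cons A u ih => rw [List.cons_append, proj_cons, proj_cons, ih, List.append_assoc]

theorem isStepSeq_proj (D : Finset E) {w : List (Finset E)} (hw : IsStepSeq sim w) :
    IsStepSeq sim (proj D w) := by
  induction w with
  | nil => exact hw
  | cons A w ih =>
    rw [isStepSeq_cons] at hw
    rw [proj_cons, isStepSeq_append]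
    exact ⟨isStepSeq_stepOrNil hw.1 Finset.inter_subset_left, ih hw.2⟩

end Steps

section Congruence

variable [DecidableEq E] {sim ser : E → E → Prop} {u v : List (Finset E)}

/-- The generating rule, extended to parts `B`, `C` that may be empty. -/
theorem ctEquiv_append_stepOrNil_union {w z : List (Finset E)} (hw : IsStepSeq sim w)
    (hz : IsStepSeq sim z) {A B C : Finset E} (hA : IsStep sim A) (hBC : B ∪ C ⊆ A)
    (hser : ∀ b ∈ B, ∀ c ∈ C, ser b c) :
    CTEquiv sim ser (w ++ (stepOrNil (B ∪ C) ++ z))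
      (w ++ (stepOrNil B ++ (stepOrNil C ++ z))) := by
  rcases B.eq_empty_or_nonempty with rfl | hB
  · rw [Finset.empty_union, stepOrNil_empty]; exact LeastEquiv.refl _
  rcases C.eq_empty_or_nonempty with rfl | hC
  · rw [Finset.union_empty, stepOrNil_empty, List.nil_append]; exact LeastEquiv.refl _
  have hBC' : (B ∪ C).Nonempty := hB.mono Finset.subset_union_left
  rw [stepOrNil_of_nonempty hBC', stepOrNil_of_nonempty hB, stepOrNil_of_nonempty hC]
  exact LeastEquiv.of_base ⟨w, z, B ∪ C, B, C, hw, hz, hA.mono hBC hBC',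
    hA.mono (Finset.subset_union_left.trans hBC) hB,
    hA.mono (Finset.subset_union_right.trans hBC) hC, rfl, hser, rfl, rfl⟩

theorem CTBase.weight_eq (hser : ∀ a, ¬ ser a a) (h : CTBase sim ser u v) :
    weight u = weight v := by
  obtain ⟨w, z, A, B, C, -, -, -, -, -, rfl, hBC, rfl, rfl⟩ := h
  have hcard : (B ∪ C).card = B.card + C.card :=
    Finset.card_union_of_disjoint (Finset.disjoint_of_forall_rel hser hBC)
  simp only [weight, List.map_append, List.map_cons, List.sum_append, List.sum_cons, hcard]
  omega

theorem CTBase.occCount_eq (hser : ∀ a, ¬ ser a a) (h : CTBase sim ser u v) (a : E) :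
    occCount a u = occCount a v := by
  obtain ⟨w, z, A, B, C, -, -, -, -, -, rfl, hBC, rfl, rfl⟩ := h
  have hdisj : a ∈ B → a ∉ C := fun hb =>
    Finset.disjoint_left.mp (Finset.disjoint_of_forall_rel hser hBC) hb
  simp only [occCount, List.countP_append, List.countP_cons, Finset.mem_union]
  by_cases hb : a ∈ B <;> by_cases hc : a ∈ C <;> simp_all

theorem CTBase.divL (hser : ∀ a, ¬ ser a a) (h : CTBase sim ser u v) (a : E) :
    CTEquiv sim ser (divL a u) (divL a v) := by
  obtain ⟨w, z, A, B, C, hw, hz, hA, hB, hC, rfl, hBC, rfl, rfl⟩ := h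
  by_cases hw' : ∃ X ∈ w, a ∈ X
  · rw [divL_append_of_exists_mem _ hw', divL_append_of_exists_mem _ hw']
    exact LeastEquiv.of_base
      ⟨divL a w, z, _, B, C, isStepSeq_divL a hw, hz, hA, hB, hC, rfl, hBC, rfl, rfl⟩
  simp only [not_exists, not_and] at hw'
  rw [divL_append_of_forall_notMem _ hw', divL_append_of_forall_notMem _ hw']
  by_cases ha : a ∈ B ∪ C
  · rw [divL_cons_of_mem _ ha, divL_cons_cons_of_disjoint _ hB.1 hC.1
      (Finset.disjoint_of_forall_rel hser hBC) ha, Finset.erase_union_distrib]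
    exact ctEquiv_append_stepOrNil_union hw hz hA
      (Finset.union_subset_union (Finset.erase_subset a B) (Finset.erase_subset a C))
      fun b hb c hc => hBC b (Finset.mem_of_mem_erase hb) c (Finset.mem_of_mem_erase hc)
  · rw [Finset.mem_union, not_or] at ha
    rw [divL_cons_of_notMem _ (Finset.mem_union.not.mpr (not_or.mpr ha)),
      divL_cons_of_notMem _ ha.1, divL_cons_of_notMem _ ha.2]
    exact LeastEquiv.of_base
      ⟨w, divL a z, _, B, C, hw, isStepSeq_divL a hz, hA, hB, hC, rfl, hBC, rfl, rfl⟩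

theorem CTBase.proj (h : CTBase sim ser u v) (D : Finset E) :
    CTEquiv sim ser (proj D u) (proj D v) := by
  obtain ⟨w, z, A, B, C, hw, hz, hA, -, -, rfl, hBC, rfl, rfl⟩ := h
  simp only [proj_append, proj_cons, Finset.union_inter_distrib_right]
  exact ctEquiv_append_stepOrNil_union (isStepSeq_proj D hw) (isStepSeq_proj D hz) hA
    (Finset.union_subset_union Finset.inter_subset_left Finset.inter_subset_left)
    fun b hb c hc => hBC b (Finset.mem_of_mem_inter_left hb) c (Finset.mem_of_mem_inter_left hc)

theorem CTBase.reverse (h : CTBase sim ser u v) :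
    CTBase sim (Function.swap ser) u.reverse v.reverse := by
  obtain ⟨w, z, A, B, C, hw, hz, hA, hB, hC, rfl, hBC, rfl, rfl⟩ := h
  refine ⟨z.reverse, w.reverse, _, C, B, isStepSeq_reverse.mpr hz, isStepSeq_reverse.mpr hw,
    Finset.union_comm B C ▸ hA, hC, hB, rfl, fun c hc b hb => hBC b hb c hc, ?_, ?_⟩ <;>
    simp [Finset.union_comm]

namespace CTEquiv

theorem weight_eq (hser : ∀ a, ¬ ser a a) (h : CTEquiv sim ser u v) : weight u = weight v :=
  LeastEquiv.apply_eq weight (fun _ _ hb => hb.weight_eq hser) h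

theorem occCount_eq (hser : ∀ a, ¬ ser a a) (h : CTEquiv sim ser u v) (a : E) :
    occCount a u = occCount a v :=
  LeastEquiv.apply_eq (occCount a) (fun _ _ hb => hb.occCount_eq hser a) h

theorem divL (hser : ∀ a, ¬ ser a a) (h : CTEquiv sim ser u v) (a : E) :
    CTEquiv sim ser (divL a u) (divL a v) :=
  LeastEquiv.map (_root_.divL a) (fun _ _ hb => hb.divL hser a) h

theorem proj (h : CTEquiv sim ser u v) (D : Finset E) :
    CTEquiv sim ser (proj D u) (proj D v) :=
  LeastEquiv.map (_root_.proj D) (fun _ _ hb => hb.proj D) h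

theorem reverse (h : CTEquiv sim ser u v) :
    CTEquiv sim (Function.swap ser) u.reverse v.reverse :=
  LeastEquiv.map List.reverse (fun _ _ hb => LeastEquiv.of_base hb.reverse) h

theorem divR (hser : ∀ a, ¬ ser a a) (h : CTEquiv sim ser u v) (a : E) :
    CTEquiv sim ser (divR a u) (divR a v) :=
  (h.reverse.divL (ser := Function.swap ser) hser a).reverse

end CTEquiv

end Congruence

theorem stmt4_general [DecidableEq E] (sim ser : E → E → Prop)
    (hsim_irr : ∀ a, ¬ sim a a)
    (hser_sub : ∀ a b, ser a b → sim a b)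
    (u v : List (Finset E))
    (huv : CTEquiv sim ser u v) :
    weight u = weight v ∧
    (∀ a : E, occCount a u = occCount a v) ∧
    (∀ a : E, CTEquiv sim ser (divR a u) (divR a v)) ∧
    (∀ a : E, CTEquiv sim ser (divL a u) (divL a v)) ∧
    (∀ D : Finset E, CTEquiv sim ser (proj D u) (proj D v)) := by
  have hser : ∀ a, ¬ ser a a := fun a h => hsim_irr a (hser_sub a a h)
  exact ⟨huv.weight_eq hser, huv.occCount_eq hser, huv.divR hser, huv.divL hser, huv.proj⟩

/-- Basic algebraic properties of comtrace congruence: weight equality,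
event-preservation, right and left cancellation, and projection. -/
theorem stmt4 [DecidableEq E] [Fintype E] (sim ser : E → E → Prop)
    (hsim_irr : ∀ a, ¬ sim a a) (hsim_symm : ∀ a b, sim a b → sim b a)
    (hser_sub : ∀ a b, ser a b → sim a b)
    (u v : List (Finset E)) (hu : IsStepSeq sim u) (hv : IsStepSeq sim v)
    (huv : CTEquiv sim ser u v) :
    weight u = weight v ∧
    (∀ a : E, occCount a u = occCount a v) ∧
    (∀ a : E, CTEquiv sim ser (divR a u) (divR a v)) ∧
    (∀ a : E, CTEquiv sim ser (divL a u) (divL a v)) ∧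
    (∀ D : Finset E, CTEquiv sim ser (proj D u) (proj D v)) :=
  stmt4_general sim ser hsim_irr hser_sub u v huv
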